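/- Let P = Σ_{i=1}^k λ_i N(μ_i, σ_i²) be a finite mixture of one-dimensional Gaussians with μ_i ∈ ℝ, σ_i < √2, λ_i ≥ 0, and Σ λ_i = 1. Then χ²(P, N(0,1)) < ∞. -/

import Mathlib

open MeasureTheory

/-- pdf of the standard Gaussian on ℝ. -/
noncomputable def gpdf (x : ℝ) : ℝ := Real.exp (-(x^2)/2) / Real.sqrt (2*Real.pi)

/-- pdf of the Gaussian with mean `μ` and standard deviation `σ`. -/
noncomputable def gpdfμσ (μ σ x : ℝ) : ℝ :=
  Real.exp (-((x - μ)^2)/(2*σ^2)) / (σ * Real.sqrt (2*Real.pi))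

lemma integrable_exp_quad {a : ℝ} (ha : a < 0) (b c : ℝ) :
    Integrable (fun x : ℝ => Real.exp (a * x ^ 2 + b * x + c)) := by
  have h : ∀ x : ℝ, a * x ^ 2 + b * x + c =
      -(-a) * (x + b / (2 * a)) ^ 2 + (c - b ^ 2 / (4 * a)) := by
    intro x
    have ha' : a ≠ 0 := ha.ne
    field_simp
    ring
  simp_rw [h, Real.exp_add]
  exact ((integrable_exp_neg_mul_sq (neg_pos.mpr ha)).comp_add_right (b / (2 * a))).mul_const _

/-- A finite mixture of Gaussians with standard deviations `< √2` has finite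
chi-squared divergence to `N(0,1)`. -/
theorem stmt15 (k : ℕ) (hk : 0 < k) (μ σ lam : Fin k → ℝ)
    (hσ0 : ∀ i, 0 < σ i) (hσ : ∀ i, σ i < Real.sqrt 2)
    (hl : ∀ i, 0 ≤ lam i) (hsum : ∑ i, lam i = 1) :
    Integrable (fun x => (∑ i, lam i * gpdfμσ (μ i) (σ i) x)^2 / gpdf x) := by
  have key : ∀ i j : Fin k, Integrable (fun x =>
      (lam i * gpdfμσ (μ i) (σ i) x) * (lam j * gpdfμσ (μ j) (σ j) x) / gpdf x) := by
    intro i j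
    set a : ℝ := 1/2 - 1/(2*(σ i)^2) - 1/(2*(σ j)^2) with ha_def
    set b : ℝ := μ i / (σ i)^2 + μ j / (σ j)^2 with hb_def
    set c : ℝ := -(μ i)^2/(2*(σ i)^2) - (μ j)^2/(2*(σ j)^2) with hc_def
    have hσi := (hσ0 i).ne'
    have hσj := (hσ0 j).ne'
    have h2i : (σ i)^2 < 2 := by
      have := hσ i
      nlinarith [Real.sq_sqrt (by norm_num : (2:ℝ) ≥ 0), Real.sqrt_nonneg 2, hσ0 i]
    have h2j : (σ j)^2 < 2 := by
      have := hσ j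
      nlinarith [Real.sq_sqrt (by norm_num : (2:ℝ) ≥ 0), Real.sqrt_nonneg 2, hσ0 j]
    have hsqi : 0 < (σ i)^2 := by positivity
    have hsqj : 0 < (σ j)^2 := by positivity
    have ha : a < 0 := by
      rw [ha_def]
      have h1 : (1:ℝ)/4 < 1/(2*(σ i)^2) := by
        rw [div_lt_div_iff₀ (by norm_num) (by positivity)]
        nlinarith
      have h2 : (1:ℝ)/4 < 1/(2*(σ j)^2) := by
        rw [div_lt_div_iff₀ (by norm_num) (by positivity)]
        nlinarith
      linarith
    have hs : 0 < Real.sqrt (2*Real.pi) := Real.sqrt_pos.mpr (by positivity)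
    have heq : (fun x => (lam i * gpdfμσ (μ i) (σ i) x) * (lam j * gpdfμσ (μ j) (σ j) x) / gpdf x)
        = fun x => (lam i * lam j / (σ i * σ j * Real.sqrt (2*Real.pi))) *
            Real.exp (a * x^2 + b * x + c) := by
      funext x
      have hexp : a * x^2 + b * x + c =
          (-((x - μ i)^2)/(2*(σ i)^2)) + ((-((x - μ j)^2)/(2*(σ j)^2)) + (x^2/2)) := by
        rw [ha_def, hb_def, hc_def]
        field_simp
        ring
      simp only [gpdf, gpdfμσ]
      rw [hexp, Real.exp_add, Real.exp_add, show -(x^2)/2 = -(x^2/2) by ring, Real.exp_neg]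
      have e3 : Real.exp (x^2/2) ≠ 0 := (Real.exp_pos _).ne'
      field_simp
    rw [heq]
    exact (integrable_exp_quad ha b c).const_mul _
  have heq2 : (fun x => (∑ i, lam i * gpdfμσ (μ i) (σ i) x)^2 / gpdf x)
      = fun x => ∑ i, ∑ j, (lam i * gpdfμσ (μ i) (σ i) x) * (lam j * gpdfμσ (μ j) (σ j) x)
          / gpdf x := by
    funext x
    rw [sq, Finset.sum_mul_sum, Finset.sum_div]
    refine Finset.sum_congr rfl fun i _ => ?_
    rw [Finset.sum_div]
  rw [heq2]
  exact integrable_finset_sum _ fun i _ => integrable_finset_sum _ fun j _ => key i j
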